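/- arXiv:quant-ph/0702229 — 10 statements merged into one kernel-verified Lean document; each statement's English description precedes it below -/
import Mathlib

section
/- Let (f, ≼) be a causal flow on a geometry (G, I, O). Then for every v ∈ V(G), iterating f starting from v (while the current vertex lies outside O) terminates, reaching a vertex of O after finitely many steps. -/
/-- If `(f, ≼)` is a causal flow on a geometry `(G, I, O)`, then from any
vertex `v`, iterating `f` (while the current vertex lies outside `O`)
terminates, reaching a vertex of `O` after finitely many steps. -/
theorem causal_flow_chains_reach_output {V : Type*} [Fintype V]
    (G : SimpleGraph V) (I O : Set V) (f : V → V) (le : V → V → Prop)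
    (hrefl : ∀ x, le x x)
    (htrans : ∀ x y z, le x y → le y z → le x z)
    (hantisymm : ∀ x y, le x y → le y x → x = y)
    (hcod : ∀ x ∉ O, f x ∉ I)
    (hadj : ∀ x ∉ O, G.Adj x (f x))
    (hle : ∀ x ∉ O, le x (f x))
    (hinf : ∀ x ∉ O, ∀ y, G.Adj y (f x) → le x y) :
    ∀ v : V, ∃ N : ℕ, f^[N] v ∈ O ∧ ∀ m < N, f^[m] v ∉ O := by
  intro v
  have hex : ∃ n : ℕ, f^[n] v ∈ O := by
    by_contra h
    push_neg at h
    -- all iterates are outside O; the chain is strictly increasing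
    have hmono : ∀ m n : ℕ, m ≤ n → le (f^[m] v) (f^[n] v) := by
      intro m n hmn
      induction n with
      | zero => simp [Nat.le_zero.mp hmn, hrefl]
      | succ n ih =>
        rcases Nat.lt_or_ge m (n+1) with h1 | h2
        · have := ih (Nat.lt_succ_iff.mp h1)
          refine htrans _ _ _ this ?_
          rw [Function.iterate_succ_apply']
          exact hle _ (h n)
        · have : m = n + 1 := le_antisymm hmn h2
          subst this; exact hrefl _
    have hinj : Function.Injective (fun n : ℕ => f^[n] v) := by
      intro m n hmn
      simp only at hmn
      by_contra hne
      wlog hlt : m < n generalizing m n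
      · exact this hmn.symm (Ne.symm hne) (lt_of_le_of_ne (not_lt.mp hlt) (Ne.symm hne))
      -- f^[m] v = f^[n] v, m < n. Then f^[m+1] v ≤ f^[n] v = f^[m] v ≤ f^[m+1] v
      have h1 : le (f^[m+1] v) (f^[n] v) := hmono _ _ hlt
      rw [← hmn] at h1
      have h2 : le (f^[m] v) (f^[m+1] v) := hmono _ _ (Nat.le_succ m)
      have heq : f^[m] v = f^[m+1] v := hantisymm _ _ h2 h1
      rw [Function.iterate_succ_apply'] at heq
      exact (hadj _ (h m)).ne heq
    exact not_injective_infinite_finite (fun n : ℕ => f^[n] v) hinj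
  classical
  refine ⟨Nat.find hex, Nat.find_spec hex, fun m hm => Nat.find_min hex hm⟩
end

section
/- Let G be a graph whose vertex set is covered by k vertex-disjoint directed paths P₁, …, P_k, and suppose the associated influencing digraph D(G, P₁, …, P_k) is acyclic. Then for any path Pᵢ = v₁ → v₂ → ⋯ → v_{nᵢ} and any indices a < b, the edge v_a v_b belongs to E(G) if and only if b = a + 1. -/
open Relation

section

variable {V : Type*} {k : ℕ}

/-- The arc relation of `D(G, P₁, …, P_k)`, path `i` being `P i 0 → P i 1 → ⋯ → P i (n i - 1)`. -/
def influenceArc (G : SimpleGraph V) (n : Fin k → ℕ) (P : Fin k → ℕ → V) (x y : V) : Prop :=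
  ∃ i a, a + 1 < n i ∧ x = P i a ∧ (y = P i (a + 1) ∨ (G.Adj y (P i (a + 1)) ∧ y ≠ x))

variable {G : SimpleGraph V} {n : Fin k → ℕ} {P : Fin k → ℕ → V} {i : Fin k} {a c : ℕ}

lemma influenceArc_succ (h : a + 1 < n i) : influenceArc G n P (P i a) (P i (a + 1)) :=
  ⟨i, a, h, rfl, Or.inl rfl⟩

lemma influenceArc_of_adj_succ {y : V} (h : a + 1 < n i) (hadj : G.Adj y (P i (a + 1)))
    (hne : y ≠ P i a) : influenceArc G n P (P i a) y :=
  ⟨i, a, h, rfl, Or.inr ⟨hadj, hne⟩⟩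

lemma transGen_influenceArc_of_lt (hac : a < c) (hc : c < n i) :
    TransGen (influenceArc G n P) (P i a) (P i c) := by
  have hsteps : TransGen (fun d e => influenceArc G n P (P i d) (P i e)) a c :=
    transGen_of_succ_of_lt _ (fun d hd => influenceArc_succ (Nat.lt_of_le_of_lt hd.2 hc)) hac
  exact hsteps.lift (P i) fun _ _ h => h

/-- A chord `P i a — P i (c + 1)` closes the cycle `P i a → ⋯ → P i c → P i a` in `D`
(unless `P i a = P i c`, when the path itself already returns to `P i a`). -/
lemma not_adj_of_acyclic (hacyc : ∀ x, ¬ TransGen (influenceArc G n P) x x)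
    (hac : a < c) (hc : c + 1 < n i) : ¬ G.Adj (P i a) (P i (c + 1)) := by
  intro hadj
  have hpath : TransGen (influenceArc G n P) (P i a) (P i c) :=
    transGen_influenceArc_of_lt hac (by omega)
  by_cases hcollide : P i a = P i c
  · exact hacyc (P i a) (hcollide ▸ hpath)
  · exact hacyc (P i a) (hpath.tail (influenceArc_of_adj_succ hc hadj hcollide))

end

theorem acyclic_implies_path_induced_general {V : Type*}
    (G : SimpleGraph V) (k : ℕ) (n : Fin k → ℕ) (P : Fin k → ℕ → V)
    (hpath : ∀ i a, a + 1 < n i → G.Adj (P i a) (P i (a + 1)))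
    (hacyc : ∀ x : V, ¬ Relation.TransGen
      (fun x y => ∃ i a, a + 1 < n i ∧ x = P i a ∧
        (y = P i (a + 1) ∨ (G.Adj y (P i (a + 1)) ∧ y ≠ x))) x x) :
    ∀ i a b, a < b → b < n i → (G.Adj (P i a) (P i b) ↔ b = a + 1) := by
  intro i a b hab hb
  obtain ⟨c, rfl⟩ : ∃ c, b = c + 1 := ⟨b - 1, by omega⟩
  constructor
  · intro hadj
    by_contra hne
    exact not_adj_of_acyclic (G := G) hacyc (by omega) hb hadj
  · intro hsucc
    obtain rfl : c = a := by omega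
    exact hpath i c hb

/-- If `G` is covered by `k` vertex-disjoint directed paths and the influencing
digraph `D(G, P₁, …, P_k)` is acyclic, then within any one path only
consecutive vertices are adjacent in `G`. -/
theorem acyclic_implies_path_induced {V : Type*} [Fintype V]
    (G : SimpleGraph V) (k : ℕ) (n : Fin k → ℕ) (P : Fin k → ℕ → V)
    (hcov : ∀ v : V, ∃ i a, a < n i ∧ P i a = v)
    (hdisj : ∀ i a j b, a < n i → b < n j → P i a = P j b → i = j ∧ a = b)
    (hpath : ∀ i a, a + 1 < n i → G.Adj (P i a) (P i (a + 1)))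
    (hacyc : ∀ x : V, ¬ Relation.TransGen
      (fun x y => ∃ i a, a + 1 < n i ∧ x = P i a ∧
        (y = P i (a + 1) ∨ (G.Adj y (P i (a + 1)) ∧ y ≠ x))) x x) :
    ∀ i a b, a < b → b < n i → (G.Adj (P i a) (P i b) ↔ b = a + 1) :=
  acyclic_implies_path_induced_general G k n P hpath hacyc
end

section
/- Let G be a graph whose vertex set is covered by k vertex-disjoint directed paths P₁, …, P_k, and suppose the associated influencing digraph D(G, P₁, …, P_k) is acyclic. Let Pᵢ = v₁ → ⋯ → v_{nᵢ} and Pⱼ = w₁ → ⋯ → w_{nⱼ} be two distinct paths. Then there do not exist edges v_a w_b ∈ E(G) and v_c w_d ∈ E(G) with a < c and b > d. -/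
/-!
Following `P_i` from `v_a` to `v_{c-1}` and then the arc `v_{c-1} → w_d` (as `w_d` is adjacent to
`v_c`), and following `P_j` from `w_d` to `w_{b-1}` and then the arc `w_{b-1} → v_a` (as `v_a` is
adjacent to `w_b`), yields a directed cycle through `v_a` in the influencing digraph.
-/

namespace InfluencingDigraph

variable {V : Type*} (G : SimpleGraph V) {k : ℕ} (n : Fin k → ℕ) (P : Fin k → ℕ → V)

/-- The arc relation of `D(G, P₁, …, P_k)`, the path `P_i` being `P i 0 → ⋯ → P i (n i - 1)`. -/
def Arc (x y : V) : Prop :=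
  ∃ i a, a + 1 < n i ∧ x = P i a ∧ (y = P i (a + 1) ∨ (G.Adj y (P i (a + 1)) ∧ y ≠ x))

variable {G n P}

theorem reflTransGen_arc_along_path {l : Fin k} {e f : ℕ} (hef : e ≤ f) (hf : f < n l) :
    Relation.ReflTransGen (Arc G n P) (P l e) (P l f) := by
  induction f, hef using Nat.le_induction with
  | base => exact .refl
  | succ m _ ih => exact (ih (by omega)).tail ⟨l, m, hf, rfl, .inl rfl⟩

theorem transGen_arc_of_adj_later {l : Fin k} {e f : ℕ} {y : V} (hef : e < f) (hf : f < n l)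
    (hadj : G.Adj y (P l f)) (hy : y ≠ P l (f - 1)) :
    Relation.TransGen (Arc G n P) (P l e) y := by
  obtain ⟨m, rfl⟩ : ∃ m, f = m + 1 := ⟨f - 1, by omega⟩
  exact .tail' (reflTransGen_arc_along_path (by omega) (by omega)) ⟨l, m, hf, rfl, .inr ⟨hadj, hy⟩⟩

end InfluencingDigraph

open InfluencingDigraph in
theorem acyclic_implies_no_crossing_general {V : Type*}
    (G : SimpleGraph V) (k : ℕ) (n : Fin k → ℕ) (P : Fin k → ℕ → V)
    (hdisj : ∀ i a j b, a < n i → b < n j → P i a = P j b → i = j ∧ a = b)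
    (hacyc : ∀ x : V, ¬ Relation.TransGen
      (fun x y => ∃ i a, a + 1 < n i ∧ x = P i a ∧
        (y = P i (a + 1) ∨ (G.Adj y (P i (a + 1)) ∧ y ≠ x))) x x) :
    ∀ i j, i ≠ j → ∀ a b c d, a < n i → c < n i → b < n j → d < n j →
      a < c → d < b →
      ¬ (G.Adj (P i a) (P j b) ∧ G.Adj (P i c) (P j d)) := by
  rintro i j hij a b c d ha hc hb hd hac hdb ⟨hab, hcd⟩
  have hne : ∀ {i j}, i ≠ j → ∀ {a b}, a < n i → b < n j → P i a ≠ P j b :=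
    fun {_ _} hij {_ _} ha hb h => hij (hdisj _ _ _ _ ha hb h).1
  have to_wd : Relation.TransGen (Arc G n P) (P i a) (P j d) :=
    transGen_arc_of_adj_later hac hc hcd.symm (hne hij.symm hd (by omega))
  have to_va : Relation.TransGen (Arc G n P) (P j d) (P i a) :=
    transGen_arc_of_adj_later hdb hb hab (hne hij ha (by omega))
  exact hacyc (P i a) (to_wd.trans to_va)

/-- If `G` is covered by `k` vertex-disjoint directed paths and the influencing
digraph `D(G, P₁, …, P_k)` is acyclic, then between two distinct paths there
are no "crossing" pairs of edges `v_a w_b`, `v_c w_d` with `a < c` and `b > d`. -/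
theorem acyclic_implies_no_crossing {V : Type*} [Fintype V]
    (G : SimpleGraph V) (k : ℕ) (n : Fin k → ℕ) (P : Fin k → ℕ → V)
    (hcov : ∀ v : V, ∃ i a, a < n i ∧ P i a = v)
    (hdisj : ∀ i a j b, a < n i → b < n j → P i a = P j b → i = j ∧ a = b)
    (hpath : ∀ i a, a + 1 < n i → G.Adj (P i a) (P i (a + 1)))
    (hacyc : ∀ x : V, ¬ Relation.TransGen
      (fun x y => ∃ i a, a + 1 < n i ∧ x = P i a ∧
        (y = P i (a + 1) ∨ (G.Adj y (P i (a + 1)) ∧ y ≠ x))) x x) :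
    ∀ i j, i ≠ j → ∀ a b c d, a < n i → c < n i → b < n j → d < n j →
      a < c → d < b →
      ¬ (G.Adj (P i a) (P j b) ∧ G.Adj (P i c) (P j d)) :=
  acyclic_implies_no_crossing_general G k n P hdisj hacyc
end

section
/- Let G be a graph whose vertex set is covered by k vertex-disjoint directed paths P₁, …, P_k with |V(Pᵢ)| = nᵢ, and suppose D(G, P₁, …, P_k) is acyclic. Then for each pair i < j, the number of edges of G with one endpoint in Pᵢ and the other in Pⱼ is at most nᵢ + nⱼ − 1. -/
/-!
Acyclicity of `D` forces the connecting edges between two paths `Pᵢ`, `Pⱼ` to be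
non-crossing: if `vₐ w_b` and `v_c w_d` are edges with `a < c` and `d < b`, then `D` has the
cycle `vₐ → ⋯ → v_{c-1} → w_d → ⋯ → w_{b-1} → vₐ`. So `vₐ w_b ↦ a + b` is injective on
connecting edges, and it takes at most `nᵢ + nⱼ − 1` values.
-/

/-- The arcs of `D(G, P₁, …, P_k)`, where path `i` is `P i 0 → ⋯ → P i (n i - 1)`. -/
def influenceStep {V ι : Type*} (G : SimpleGraph V) (n : ι → ℕ) (P : ι → ℕ → V) (x y : V) :
    Prop :=
  ∃ i a, a + 1 < n i ∧ x = P i a ∧ (y = P i (a + 1) ∨ (G.Adj y (P i (a + 1)) ∧ y ≠ x))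

section InfluenceStep

variable {V ι : Type*} {G : SimpleGraph V} {n : ι → ℕ} {P : ι → ℕ → V}

theorem reflTransGen_influenceStep_along_path {l : ι} {a b : ℕ} (hab : a ≤ b) (hb : b < n l) :
    Relation.ReflTransGen (influenceStep G n P) (P l a) (P l b) := by
  induction b, hab using Nat.le_induction with
  | base => exact .refl
  | succ b _ ih => exact .tail (ih (by omega)) ⟨l, b, hb, rfl, .inl rfl⟩

theorem transGen_influenceStep_of_adj {l : ι} {a c : ℕ} {w : V} (hac : a < c) (hc : c < n l)
    (hadj : G.Adj w (P l c)) (hw : w ≠ P l (c - 1)) :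
    Relation.TransGen (influenceStep G n P) (P l a) w := by
  obtain ⟨c, rfl⟩ : ∃ c', c = c' + 1 := ⟨c - 1, by omega⟩
  exact .tail' (reflTransGen_influenceStep_along_path (by omega) (by omega))
    ⟨l, c, hc, rfl, .inr ⟨hadj, hw⟩⟩

theorem le_of_adj_of_adj_of_lt (hacyc : ∀ x, ¬ Relation.TransGen (influenceStep G n P) x x)
    (hdisj : ∀ i a j b, a < n i → b < n j → P i a = P j b → i = j ∧ a = b)
    {i j : ι} (hij : i ≠ j) {a b c d : ℕ} (hac : a < c) (hc : c < n i) (hb : b < n j)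
    (hd : d < n j) (hab : G.Adj (P i a) (P j b)) (hcd : G.Adj (P i c) (P j d)) : b ≤ d := by
  by_contra! hdb
  have hd_off : P j d ≠ P i (c - 1) := fun h => hij (hdisj j d i (c - 1) hd (by omega) h).1.symm
  have ha_off : P i a ≠ P j (b - 1) := fun h =>
    hij (hdisj i a j (b - 1) (by omega) (by omega) h).1
  exact hacyc _ ((transGen_influenceStep_of_adj hac hc hcd.symm hd_off).trans
    (transGen_influenceStep_of_adj hdb hb hab ha_off))

end InfluenceStep

theorem ncard_le_of_monotone_pairs {S : Set (ℕ × ℕ)} {N M : ℕ}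
    (hS : ∀ p ∈ S, p.1 < N ∧ p.2 < M) (hmono : ∀ p ∈ S, ∀ q ∈ S, p.1 < q.1 → p.2 ≤ q.2) :
    S.ncard ≤ N + M - 1 := by
  have hinj : Set.InjOn (fun p : ℕ × ℕ => p.1 + p.2) S := by
    rintro ⟨a, b⟩ hp ⟨c, d⟩ hq (hsum : a + b = c + d)
    rcases lt_trichotomy a c with h | rfl | h
    · have := hmono _ hp _ hq h; simp only at this; omega
    · simp only [Prod.mk.injEq, true_and]; omega
    · have := hmono _ hq _ hp h; simp only at this; omega
  calc S.ncard ≤ (Set.Iio (N + M - 1)).ncard :=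
        Set.ncard_le_ncard_of_injOn _
          (fun p hp => by have := hS p hp; simp only [Set.mem_Iio]; omega) hinj (Set.finite_Iio _)
    _ = N + M - 1 := Set.ncard_Iio_nat _

theorem acyclic_connecting_edges_bound_general {V : Type*}
    (G : SimpleGraph V) (k : ℕ) (n : Fin k → ℕ) (P : Fin k → ℕ → V)
    (hdisj : ∀ i a j b, a < n i → b < n j → P i a = P j b → i = j ∧ a = b)
    (hacyc : ∀ x : V, ¬ Relation.TransGen
      (fun x y => ∃ i a, a + 1 < n i ∧ x = P i a ∧
        (y = P i (a + 1) ∨ (G.Adj y (P i (a + 1)) ∧ y ≠ x))) x x) :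
    ∀ i j : Fin k, i < j →
      {p : ℕ × ℕ | p.1 < n i ∧ p.2 < n j ∧
        G.Adj (P i p.1) (P j p.2)}.ncard ≤ n i + n j - 1 := by
  intro i j hij
  refine ncard_le_of_monotone_pairs (fun p hp => ⟨hp.1, hp.2.1⟩) ?_
  rintro ⟨a, b⟩ ⟨-, hb, hab⟩ ⟨c, d⟩ ⟨hc, hd, hcd⟩ hac
  exact le_of_adj_of_adj_of_lt (G := G) hacyc hdisj hij.ne hac hc hb hd hab hcd

/-- If `G` is covered by `k` vertex-disjoint directed paths and the influencing
digraph `D(G, P₁, …, P_k)` is acyclic, then for each pair of distinct paths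
`Pᵢ`, `Pⱼ` the number of connecting edges between them is at most
`nᵢ + nⱼ − 1`. -/
theorem acyclic_connecting_edges_bound {V : Type*} [Fintype V]
    (G : SimpleGraph V) (k : ℕ) (n : Fin k → ℕ) (P : Fin k → ℕ → V)
    (hcov : ∀ v : V, ∃ i a, a < n i ∧ P i a = v)
    (hdisj : ∀ i a j b, a < n i → b < n j → P i a = P j b → i = j ∧ a = b)
    (hpath : ∀ i a, a + 1 < n i → G.Adj (P i a) (P i (a + 1)))
    (hacyc : ∀ x : V, ¬ Relation.TransGen
      (fun x y => ∃ i a, a + 1 < n i ∧ x = P i a ∧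
        (y = P i (a + 1) ∨ (G.Adj y (P i (a + 1)) ∧ y ≠ x))) x x) :
    ∀ i j : Fin k, i < j →
      {p : ℕ × ℕ | p.1 < n i ∧ p.2 < n j ∧
        G.Adj (P i p.1) (P j p.2)}.ncard ≤ n i + n j - 1 :=
  acyclic_connecting_edges_bound_general G k n P hdisj hacyc
end

section
/- Let G be a graph on n vertices covered by k vertex-disjoint directed paths P₁, …, P_k such that D(G, P₁, …, P_k) is acyclic. Then |E(G)| ≤ kn − k(k+1)/2. -/
/-!
Acyclicity of `D` yields an injective ranking `σ` of the vertices that increases along every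
arc of `D`. Count each edge at its `σ`-lower endpoint `u`. If `y` is adjacent to `P i c`, then
either `y = P i (c - 1)` or `D` has the arc `P i (c - 1) → y`; either way `y` lies above
`P i 0, …, P i (c - 1)`. Hence `u` has at most one higher neighbour on each path, and none on a
path lying entirely below `u`. Ordered by their top vertices, the top of the `r`-th path lies
above `r` whole paths, so at least `1 + ⋯ + k = k(k+1)/2` of the `k·n` pairs (vertex, path)
carry no edge.
-/

open Finset Relation

/-- The arcs of `D(G, P₁, …, P_k)`. -/
def influenceRel {V : Type*} (G : SimpleGraph V) {k : ℕ} (n : Fin k → ℕ) (P : Fin k → ℕ → V)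
    (x y : V) : Prop :=
  ∃ i a, a + 1 < n i ∧ x = P i a ∧ (y = P i (a + 1) ∨ (G.Adj y (P i (a + 1)) ∧ y ≠ x))

theorem Relation.exists_injective_lt_of_irrefl_transGen {V : Type*} [Fintype V]
    {R : V → V → Prop} (h : ∀ x, ¬ TransGen R x x) :
    ∃ σ : V → ℕ ×ₗ ℕ, Function.Injective σ ∧ ∀ x y, R x y → σ x < σ y := by
  classical
  let height (v : V) : ℕ := #{u | TransGen R u v}
  have height_lt {x y : V} (hxy : R x y) : height x < height y := by
    refine card_lt_card <| (ssubset_iff_of_subset fun u hu => ?_).2 ⟨x, ?_, ?_⟩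
    · simp only [mem_filter, mem_univ, true_and] at hu ⊢
      exact hu.tail hxy
    · simpa using TransGen.single hxy
    · simpa using h x
  -- ties in `height` are broken by an enumeration of `V`
  refine ⟨fun v => toLex (height v, (Fintype.equivFin V v : ℕ)), fun u v huv => ?_,
    fun x y hxy => Prod.Lex.toLex_lt_toLex.2 (Or.inl (height_lt hxy))⟩
  simp only [toLex_inj, Prod.mk.injEq] at huv
  exact (Fintype.equivFin V).injective (Fin.ext huv.2)

theorem Function.Injective.sum_card_filter_le {ι α : Type*} [Fintype ι] [LinearOrder α]
    {f : ι → α} (hf : Function.Injective f) :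
    ∑ i, #{j | f j ≤ f i} = Fintype.card ι * (Fintype.card ι + 1) / 2 := by
  classical
  have pair (i j : ι) : (if f j ≤ f i then 1 else 0) + (if f i ≤ f j then 1 else 0) =
      1 + if j = i then 1 else 0 := by
    rcases lt_trichotomy (f j) (f i) with h | h | h
    · simp [h.le, h.not_ge, hf.ne_iff.1 h.ne]
    · simp [hf h]
    · simp [h.le, h.not_ge, hf.ne_iff.1 h.ne']
  have : 2 * ∑ i, #{j | f j ≤ f i} = Fintype.card ι * (Fintype.card ι + 1) := by
    simp only [card_filter]
    calc 2 * ∑ i, ∑ j, (if f j ≤ f i then 1 else 0)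
        = ∑ i, ∑ j, ((if f j ≤ f i then 1 else 0) + (if f i ≤ f j then 1 else 0)) := by
          rw [two_mul]
          nth_rewrite 2 [sum_comm]
          simp only [← sum_add_distrib]
      _ = Fintype.card ι * (Fintype.card ι + 1) := by
          simp [pair, sum_add_distrib, mul_add]
  omega

theorem SimpleGraph.card_edgeFinset_eq_sum_card_filter_lt {V α : Type*} [Fintype V]
    [DecidableEq V] [LinearOrder α] (G : SimpleGraph V) [DecidableRel G.Adj] {σ : V → α}
    (hσ : Function.Injective σ) :
    #G.edgeFinset = ∑ u, #{v | G.Adj u v ∧ σ u < σ v} := by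
  rw [← card_sigma]
  symm
  refine card_bij (fun x _ => s(x.1, x.2)) (fun x hx => ?_) (fun x hx y hy hxy => ?_) ?_
  · simp_all
  · simp only [mem_sigma, mem_univ, mem_filter, true_and] at hx hy
    rcases Sym2.eq_iff.1 hxy with ⟨h1, h2⟩ | ⟨h1, h2⟩
    · exact Sigma.ext h1 (heq_of_eq h2)
    · exact absurd (h1 ▸ h2 ▸ hy.2) hx.2.not_gt
  · refine Sym2.ind fun u v huv => ?_
    rw [mem_edgeFinset, mem_edgeSet] at huv
    rcases (hσ.ne huv.ne).lt_or_gt with h | h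
    · exact ⟨⟨u, v⟩, by simp [huv, h], rfl⟩
    · exact ⟨⟨v, u⟩, by simp [huv.symm, h], Sym2.eq_swap⟩

section PathCover

variable {V α : Type*} [LinearOrder α] {G : SimpleGraph V} {k : ℕ} {n : Fin k → ℕ}
  {P : Fin k → ℕ → V} {σ : V → α}

theorem le_along_path (hσ : ∀ x y, influenceRel G n P x y → σ x < σ y) (i : Fin k) {a b : ℕ}
    (hab : a ≤ b) (hb : b < n i) : σ (P i a) ≤ σ (P i b) := by
  induction b, hab using Nat.le_induction with
  | base => exact le_rfl
  | succ b hab ih => exact (ih (by omega)).trans (hσ _ _ ⟨i, b, hb, rfl, Or.inl rfl⟩).le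

theorem le_of_adj_of_lt (hσ : ∀ x y, influenceRel G n P x y → σ x < σ y) (i : Fin k)
    {b c : ℕ} (hbc : b < c) (hc : c < n i) {y : V} (hy : G.Adj y (P i c)) :
    σ (P i b) ≤ σ y := by
  obtain ⟨c, rfl⟩ : ∃ c', c = c' + 1 := ⟨c - 1, by omega⟩
  have hb : σ (P i b) ≤ σ (P i c) := le_along_path hσ i (by omega) (by omega)
  by_cases hyc : y = P i c
  · exact hyc ▸ hb
  · exact hb.trans (hσ _ _ ⟨i, c, hc, rfl, Or.inr ⟨hy, hyc⟩⟩).le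

theorem card_higher_neighbors_le_card_paths_above [Fintype V] [DecidableRel G.Adj]
    (hσ : ∀ x y, influenceRel G n P x y → σ x < σ y)
    (hcov : ∀ v : V, ∃ i a, a < n i ∧ P i a = v) (u : V) :
    #{v | G.Adj u v ∧ σ u < σ v} ≤ #{i | ∃ b < n i, σ u < σ (P i b)} := by
  choose p a ha hP using hcov
  have below {v w : V} (hvw : p v = p w) (hlt : a v < a w) (hw : G.Adj u w) : σ v ≤ σ u := by
    have := le_of_adj_of_lt hσ (p w) hlt (ha w) ((hP w).symm ▸ hw)
    rwa [← hvw, hP v] at this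
  refine card_le_card_of_injOn p (fun v hv => ?_) (fun v hv w hw hvw => ?_)
  · simp only [coe_filter, mem_univ, true_and, Set.mem_ofPred_eq] at hv ⊢
    exact ⟨a v, ha v, (hP v).symm ▸ hv.2⟩
  · simp only [coe_filter, mem_univ, true_and, Set.mem_ofPred_eq] at hv hw
    rcases lt_trichotomy (a v) (a w) with h | h | h
    · exact absurd (below hvw h hw.1) hv.2.not_ge
    · rw [← hP v, ← hP w, hvw, h]
    · exact absurd (below hvw.symm h hv.1) hw.2.not_ge

theorem mul_succ_div_two_le_sum_card_paths_below [Fintype V] (hσ : Function.Injective σ)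
    (hpos : ∀ i, 0 < n i)
    (hdisj : ∀ i a j b, a < n i → b < n j → P i a = P j b → i = j ∧ a = b) :
    k * (k + 1) / 2 ≤ ∑ u, #{i | ¬ ∃ b < n i, σ u < σ (P i b)} := by
  choose m hm hmax using fun i =>
    exists_max_image (range (n i)) (fun b => σ (P i b)) (nonempty_range_iff.2 (hpos i).ne')
  simp only [mem_range] at hm hmax
  let top (i : Fin k) : V := P i (m i)
  have top_inj : Function.Injective top := fun i j h => (hdisj _ _ _ _ (hm i) (hm j) h).1
  have below_top (i j : Fin k) : (¬ ∃ b < n j, σ (top i) < σ (P j b)) ↔ σ (top j) ≤ σ (top i) := by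
    simp only [not_exists, not_and, not_lt]
    exact ⟨fun h => h _ (hm j), fun h b hb => (hmax j b hb).trans h⟩
  calc k * (k + 1) / 2 = ∑ i, #{j | σ (top j) ≤ σ (top i)} := by
        simpa using ((hσ.comp top_inj).sum_card_filter_le).symm
    _ = ∑ i, #{j | ¬ ∃ b < n j, σ (top i) < σ (P j b)} := by simp only [below_top]
    _ ≤ ∑ u, #{i | ¬ ∃ b < n i, σ u < σ (P i b)} :=
        (sum_map univ ⟨top, top_inj⟩
          (fun u => #{i | ¬ ∃ b < n i, σ u < σ (P i b)})).symm.trans_le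
          (sum_le_sum_of_subset (subset_univ _))

end PathCover

theorem acyclic_edge_bound_general {V : Type*} [Fintype V]
    (G : SimpleGraph V) (k : ℕ) (n : Fin k → ℕ) (P : Fin k → ℕ → V)
    (hpos : ∀ i, 0 < n i)
    (hcov : ∀ v : V, ∃ i a, a < n i ∧ P i a = v)
    (hdisj : ∀ i a j b, a < n i → b < n j → P i a = P j b → i = j ∧ a = b)
    (hacyc : ∀ x : V, ¬ Relation.TransGen
      (fun x y => ∃ i a, a + 1 < n i ∧ x = P i a ∧
        (y = P i (a + 1) ∨ (G.Adj y (P i (a + 1)) ∧ y ≠ x))) x x) :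
    G.edgeSet.ncard ≤ k * Fintype.card V - k * (k + 1) / 2 := by
  classical
  obtain ⟨σ, hσ_inj, hσ⟩ :=
    exists_injective_lt_of_irrefl_transGen (R := influenceRel G n P) hacyc
  have upper := card_higher_neighbors_le_card_paths_above hσ hcov
  have lower := mul_succ_div_two_le_sum_card_paths_below hσ_inj hpos hdisj
  have total (u : V) :
      #{i | ∃ b < n i, σ u < σ (P i b)} + #{i | ¬ ∃ b < n i, σ u < σ (P i b)} = k := by
    simpa using card_filter_add_card_filter_not (s := univ)
      (fun i => ∃ b < n i, σ u < σ (P i b))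
  rw [← SimpleGraph.coe_edgeFinset, Set.ncard_coe_finset,
    G.card_edgeFinset_eq_sum_card_filter_lt hσ_inj]
  have bound : ∑ u, #{v | G.Adj u v ∧ σ u < σ v} + k * (k + 1) / 2 ≤ k * Fintype.card V := calc
    _ ≤ ∑ u, (#{i | ∃ b < n i, σ u < σ (P i b)} + #{i | ¬ ∃ b < n i, σ u < σ (P i b)}) := by
        rw [sum_add_distrib]
        exact add_le_add (sum_le_sum fun u _ => upper u) lower
    _ = k * Fintype.card V := by simp only [total, sum_const, card_univ, smul_eq_mul, mul_comm]
  omega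

/-- If `G` on `n` vertices is covered by `k` vertex-disjoint directed paths and
the influencing digraph `D(G, P₁, …, P_k)` is acyclic, then
`|E(G)| ≤ k·n − k(k+1)/2`. -/
theorem acyclic_edge_bound {V : Type*} [Fintype V]
    (G : SimpleGraph V) (k : ℕ) (n : Fin k → ℕ) (P : Fin k → ℕ → V)
    (hpos : ∀ i, 0 < n i)
    (hcov : ∀ v : V, ∃ i a, a < n i ∧ P i a = v)
    (hdisj : ∀ i a j b, a < n i → b < n j → P i a = P j b → i = j ∧ a = b)
    (hpath : ∀ i a, a + 1 < n i → G.Adj (P i a) (P i (a + 1)))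
    (hacyc : ∀ x : V, ¬ Relation.TransGen
      (fun x y => ∃ i a, a + 1 < n i ∧ x = P i a ∧
        (y = P i (a + 1) ∨ (G.Adj y (P i (a + 1)) ∧ y ≠ x))) x x) :
    G.edgeSet.ncard ≤ k * Fintype.card V - k * (k + 1) / 2 :=
  acyclic_edge_bound_general G k n P hpos hcov hdisj hacyc
end

section
/- If a geometry (G, I, O) has a causal flow, then |E(G)| ≤ k·n − k(k+1)/2, where n = |V(G)| and k = |O|. -/
/-!
A causal flow `f` is injective off `O`, so if `O ⊆ S` and `f` maps `S \ O` into `S`, exactly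
`|O|` vertices of `S` lie outside `f '' (S \ O)`. A `≼`-minimal vertex `x` of `S \ O` is one of
them, and so is every neighbour of `x` other than `f x`: a neighbour `f w` forces `w ≼ x`, hence
`w = x`. Thus `x` has at most `|O|` neighbours in `S`. Deleting such vertices one at a time until
only `O` is left, where at most `|O|.choose 2` edges remain, gives
`|E| ≤ |O| (n - |O|) + |O|.choose 2 = |O| n - |O| (|O| + 1) / 2`.
-/

open Set

theorem Nat.choose_two_add_succ_choose_two (k : ℕ) : k.choose 2 + (k + 1).choose 2 = k * k := by
  induction k with
  | zero => rfl
  | succ k ih =>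
    rw [Nat.choose_succ_succ' (k + 1) 1, Nat.choose_one_right]
    rw [Nat.choose_succ_succ' k 1, Nat.choose_one_right] at ih ⊢
    linarith

theorem Set.ncard_sdiff_image_sdiff {α : Type*} [Finite α] {f : α → α} {s t : Set α}
    (hts : t ⊆ s) (hmaps : MapsTo f (s \ t) s) (hinj : InjOn f (s \ t)) :
    (s \ f '' (s \ t)).ncard = t.ncard := by
  rw [ncard_sdiff hmaps.image_subset, hinj.ncard_image, ncard_sdiff hts]
  have := ncard_le_ncard hts
  omega

namespace SimpleGraph

variable {V : Type*} [Finite V]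

theorem ncard_edgeSet_le_choose_two_of_support_subset {G : SimpleGraph V} {s : Set V}
    (h : G.support ⊆ s) : G.edgeSet.ncard ≤ s.ncard.choose 2 := by
  classical
  have := Fintype.ofFinite V
  rw [← coe_edgeFinset, ncard_coe_finset, ← card_edgeFinset_induce_of_support_subset h,
    ← Nat.card_coe_set_eq, Nat.card_eq_fintype_card]
  exact card_edgeFinset_le_card_choose_two

theorem ncard_edgeSet_deleteIncidenceSet_add_ncard_neighborSet (G : SimpleGraph V) (x : V) :
    (G.deleteIncidenceSet x).edgeSet.ncard + (G.neighborSet x).ncard = G.edgeSet.ncard := by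
  classical
  rw [edgeSet_deleteIncidenceSet, ← ncard_congr' (G.incidenceSetEquivNeighborSet x),
    ncard_sdiff_add_ncard_of_subset (G.incidenceSet_subset x)]

end SimpleGraph

/-- A causal flow on the geometry `(G, ∅, O)`, for the ambient partial order. -/
structure IsCausalFlow {V : Type*} [PartialOrder V] (G : SimpleGraph V) (O : Set V)
    (f : V → V) : Prop where
  adj_apply : ∀ x ∉ O, G.Adj x (f x)
  le_apply : ∀ x ∉ O, x ≤ f x
  le_of_adj_apply : ∀ x ∉ O, ∀ y, G.Adj y (f x) → x ≤ y

namespace IsCausalFlow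

variable {V : Type*} [PartialOrder V] {G H : SimpleGraph V} {O S : Set V} {f : V → V} {x : V}

theorem injOn (hf : IsCausalFlow G O f) : InjOn f Oᶜ := fun x hx y hy hxy =>
  le_antisymm (hf.le_of_adj_apply x hx y (hxy ▸ hf.adj_apply y hy))
    (hf.le_of_adj_apply y hy x (hxy.symm ▸ hf.adj_apply x hx))

theorem apply_ne_of_minimal (hf : IsCausalFlow G O f) (hx : Minimal (· ∈ S \ O) x) {y : V}
    (hy : y ∈ S \ O) : f y ≠ x := by
  rintro rfl
  have hfy : y = f y := hx.eq_of_le hy (hf.le_apply y hy.2)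
  exact (hf.adj_apply y hy.2).ne hfy

theorem eq_of_adj_apply_of_minimal (hf : IsCausalFlow G O f) (hx : Minimal (· ∈ S \ O) x)
    {w : V} (hw : w ∈ S \ O) (hadj : G.Adj x (f w)) : w = x :=
  hx.eq_of_le hw (hf.le_of_adj_apply w hw.2 x hadj)

theorem neighborSet_subset_of_minimal (hf : IsCausalFlow G O f) (hHG : H ≤ G)
    (hHS : H.support ⊆ S) (hx : Minimal (· ∈ S \ O) x) :
    H.neighborSet x ⊆ insert (f x) ((S \ f '' (S \ O)) \ {x}) := by
  intro y hxy
  have hyS : y ∈ S := hHS ⟨x, hxy.symm⟩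
  by_cases hy : y ∈ f '' (S \ O)
  · obtain ⟨w, hw, rfl⟩ := hy
    exact .inl (by rw [hf.eq_of_adj_apply_of_minimal hx hw (hHG hxy)])
  · exact .inr ⟨⟨hyS, hy⟩, hxy.ne.symm⟩

theorem ncard_neighborSet_le_of_minimal [Finite V] (hf : IsCausalFlow G O f) (hOS : O ⊆ S)
    (hmaps : MapsTo f (S \ O) S) (hHG : H ≤ G) (hHS : H.support ⊆ S)
    (hx : Minimal (· ∈ S \ O) x) : (H.neighborSet x).ncard ≤ O.ncard := by
  have hxT : x ∈ S \ f '' (S \ O) :=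
    ⟨hx.prop.1, fun ⟨y, hy, hyx⟩ => hf.apply_ne_of_minimal hx hy hyx⟩
  calc (H.neighborSet x).ncard
      ≤ (insert (f x) ((S \ f '' (S \ O)) \ {x})).ncard :=
        ncard_le_ncard (hf.neighborSet_subset_of_minimal hHG hHS hx)
    _ ≤ ((S \ f '' (S \ O)) \ {x}).ncard + 1 := ncard_insert_le _ _
    _ = O.ncard := by
        rw [ncard_sdiff_singleton_add_one hxT,
          ncard_sdiff_image_sdiff hOS hmaps (hf.injOn.mono fun _ hy => hy.2)]

theorem ncard_edgeSet_add_choose_two_le [Finite V] (hf : IsCausalFlow G O f) (hOS : O ⊆ S)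
    (hmaps : MapsTo f (S \ O) S) (hHG : H ≤ G) (hHS : H.support ⊆ S) :
    H.edgeSet.ncard + (O.ncard + 1).choose 2 ≤ O.ncard * S.ncard := by
  induction hn : (S \ O).ncard generalizing S H with
  | zero =>
    obtain rfl : S = O := hOS.antisymm' (sdiff_eq_empty.mp ((ncard_eq_zero).mp hn))
    rw [← Nat.choose_two_add_succ_choose_two]
    exact Nat.add_le_add_right (H.ncard_edgeSet_le_choose_two_of_support_subset hHS) _
  | succ n ih =>
    obtain ⟨x, hx⟩ := exists_minimal_of_wellFoundedLT (· ∈ S \ O)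
      (nonempty_of_ncard_ne_zero (hn ▸ n.succ_ne_zero))
    have hdeg := hf.ncard_neighborSet_le_of_minimal hOS hmaps hHG hHS hx
    have hrest := ih (S := S \ {x}) (H := H.deleteIncidenceSet x)
      (subset_sdiff_singleton hOS hx.prop.2)
      (fun y hy => ⟨hmaps ⟨hy.1.1, hy.2⟩, hf.apply_ne_of_minimal hx ⟨hy.1.1, hy.2⟩⟩)
      ((H.deleteIncidenceSet_le x).trans hHG)
      ((H.support_deleteIncidenceSet_subset x).trans (sdiff_subset_sdiff_left hHS))
      (by rw [sdiff_sdiff_comm, ncard_sdiff_singleton_of_mem hx.prop, hn, Nat.add_sub_cancel])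
    rw [← H.ncard_edgeSet_deleteIncidenceSet_add_ncard_neighborSet x,
      ← ncard_sdiff_singleton_add_one hx.prop.1, mul_add_one]
    omega

end IsCausalFlow

theorem causal_flow_edge_bound_general {V : Type*} [Fintype V] (G : SimpleGraph V)
    (O : Set V) (f : V → V) (le : V → V → Prop)
    (hrefl : ∀ x, le x x)
    (htrans : ∀ x y z, le x y → le y z → le x z)
    (hantisymm : ∀ x y, le x y → le y x → x = y)
    (hadj : ∀ x ∉ O, G.Adj x (f x))
    (hle : ∀ x ∉ O, le x (f x))
    (hinf : ∀ x ∉ O, ∀ y, G.Adj y (f x) → le x y) :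
    G.edgeSet.ncard ≤ O.ncard * Fintype.card V - O.ncard * (O.ncard + 1) / 2 := by
  let : PartialOrder V :=
    { le, le_refl := hrefl, le_trans := htrans, le_antisymm := hantisymm }
  have hf : IsCausalFlow G O f := ⟨hadj, hle, hinf⟩
  have h := hf.ncard_edgeSet_add_choose_two_le (subset_univ O) (mapsTo_univ f _) le_rfl
    (subset_univ _)
  rw [ncard_univ, Nat.card_eq_fintype_card, Nat.choose_two_right, Nat.add_sub_cancel,
    mul_comm] at h
  omega

/-- If a geometry `(G, I, O)` has a causal flow, then
`|E(G)| ≤ k·n − k(k+1)/2`, where `n = |V(G)|` and `k = |O|`. -/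
theorem causal_flow_edge_bound {V : Type*} [Fintype V] (G : SimpleGraph V)
    (I O : Set V) (f : V → V) (le : V → V → Prop)
    (hrefl : ∀ x, le x x)
    (htrans : ∀ x y z, le x y → le y z → le x z)
    (hantisymm : ∀ x y, le x y → le y x → x = y)
    (hcod : ∀ x ∉ O, f x ∉ I)
    (hadj : ∀ x ∉ O, G.Adj x (f x))
    (hle : ∀ x ∉ O, le x (f x))
    (hinf : ∀ x ∉ O, ∀ y, G.Adj y (f x) → le x y) :
    G.edgeSet.ncard ≤ O.ncard * Fintype.card V - O.ncard * (O.ncard + 1) / 2 :=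
  causal_flow_edge_bound_general G O f le hrefl htrans hantisymm hadj hle hinf
end

section
/- The influencing digraph D(G(n₁,…,n_k), P₁, …, P_k) of the extremal construction is acyclic. -/
/-- Vertices of the extremal construction `G(n₁,…,n_k)`:
`v_{i,a}` with `1 ≤ a ≤ nᵢ`, encoded as pairs `(i, a)`. -/
def CVert (k : ℕ) (n : Fin k → ℕ) : Type :=
  {p : Fin k × ℕ // 1 ≤ p.2 ∧ p.2 ≤ n p.1}

/-- The defining relation of the extremal construction: path edges
`v_{i,a} v_{i,a+1}`, and for `i < j` the connecting edges of types
(i) `v_{i,a} v_{j,a}` (`1 ≤ a < nᵢ`), (ii) `v_{i,a+1} v_{j,a}` (`1 ≤ a < nᵢ`),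
(iii) `v_{i,nᵢ} v_{j,a}` (`nᵢ ≤ a ≤ nⱼ`). -/
def CRel (k : ℕ) (n : Fin k → ℕ) (x y : CVert k n) : Prop :=
  (x.val.1 = y.val.1 ∧ y.val.2 = x.val.2 + 1)
  ∨ (x.val.1 < y.val.1 ∧ x.val.2 = y.val.2 ∧ x.val.2 < n x.val.1)
  ∨ (x.val.1 < y.val.1 ∧ x.val.2 = y.val.2 + 1 ∧ y.val.2 < n x.val.1)
  ∨ (x.val.1 < y.val.1 ∧ x.val.2 = n x.val.1 ∧ n x.val.1 ≤ y.val.2)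

/-- The graph `G(n₁,…,n_k)` of the extremal construction. -/
def CGraph (k : ℕ) (n : Fin k → ℕ) : SimpleGraph (CVert k n) :=
  SimpleGraph.fromRel (CRel k n)

/-- The successor `f(v_{i,a}) = v_{i,a+1}` along the path `Pᵢ`,
defined for `a < nᵢ`. -/
def CSucc (k : ℕ) (n : Fin k → ℕ) (x : CVert k n)
    (h : x.val.2 < n x.val.1) : CVert k n :=
  ⟨(x.val.1, x.val.2 + 1), ⟨Nat.succ_le_succ (Nat.zero_le _), h⟩⟩

/-- Arcs of the influencing digraph `D(G(n₁,…,n_k), P₁, …, P_k)`: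
`x → y` iff `y = f(x)`, or `y ≠ x` and `y` is adjacent to `f(x)`. -/
def CArc (k : ℕ) (n : Fin k → ℕ) (x y : CVert k n) : Prop :=
  ∃ h : x.val.2 < n x.val.1,
    y = CSucc k n x h ∨ ((CGraph k n).Adj y (CSucc k n x h) ∧ y ≠ x)

/-!
Order the vertices `v_{i,a}` lexicographically by `(a, i)`. Every arc of the digraph either
goes up in this order or ends in a final vertex `v_{j,n_j}`, and no arc leaves a final vertex.
So along a closed walk the rank would strictly increase at every step, which is impossible.
-/

namespace Relation

theorem not_transGen_self_of_lt_or_isTerminal {α β : Type*} [Preorder β] {R : α → α → Prop}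
    (f : α → β) (hR : ∀ x y, R x y → f x < f y ∨ ∀ z, ¬ R y z) (x : α) :
    ¬ TransGen R x x := by
  have increasing : ∀ y, TransGen R x y → (∃ z, R y z) → f x < f y := by
    intro y hxy
    induction hxy with
    | single hxy =>
      rintro ⟨z, hyz⟩
      exact (hR _ _ hxy).resolve_right fun h => h z hyz
    | tail _ hby ih =>
      rintro ⟨z, hyz⟩
      exact (ih ⟨_, hby⟩).trans ((hR _ _ hby).resolve_right fun h => h z hyz)
  intro hxx
  obtain ⟨z, hxz, -⟩ := TransGen.head'_iff.mp hxx
  exact lt_irrefl _ (increasing x hxx ⟨z, hxz⟩)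

end Relation

namespace CVert

variable {k : ℕ} {n : Fin k → ℕ}

def lexRank (x : CVert k n) : ℕ ×ₗ Fin k :=
  toLex (x.val.2, x.val.1)

theorem lexRank_lt_lexRank {x y : CVert k n} :
    x.lexRank < y.lexRank ↔ x.val.2 < y.val.2 ∨ x.val.2 = y.val.2 ∧ x.val.1 < y.val.1 :=
  Prod.Lex.toLex_lt_toLex

end CVert

namespace CArc

variable {k : ℕ} {n : Fin k → ℕ}

theorem lexRank_lt_or_final {x y : CVert k n} (hxy : CArc k n x y) :
    x.lexRank < y.lexRank ∨ y.val.2 = n y.val.1 := by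
  obtain ⟨hx, rfl | ⟨⟨-, hrel⟩, hne⟩⟩ := hxy
  · exact Or.inl (CVert.lexRank_lt_lexRank.mpr (Or.inl (Nat.lt_succ_self _)))
  rw [CVert.lexRank_lt_lexRank]
  have hz₁ : (CSucc k n x hx).val.1 = x.val.1 := rfl
  have hz₂ : (CSucc k n x hx).val.2 = x.val.2 + 1 := rfl
  rcases hrel with h | h <;> simp only [CRel, hz₁, hz₂] at h
  · rcases h with ⟨h₁, h₂⟩ | h | h | h
    · exact absurd (Subtype.ext (Prod.ext h₁ (by omega))) hne
    all_goals omega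
  · omega

end CArc

theorem extremal_construction_acyclic_general (k : ℕ) (n : Fin k → ℕ) :
    ∀ x : CVert k n, ¬ Relation.TransGen (CArc k n) x x :=
  Relation.not_transGen_self_of_lt_or_isTerminal CVert.lexRank fun _ _ hxy =>
    hxy.lexRank_lt_or_final.imp_right fun hy _ hyz => hyz.1.ne hy

/-- The influencing digraph `D(G(n₁,…,n_k), P₁, …, P_k)` of the extremal
construction is acyclic. -/
theorem extremal_construction_acyclic (k : ℕ) (n : Fin k → ℕ)
    (hpos : ∀ i, 1 ≤ n i) (hmono : ∀ i j : Fin k, i ≤ j → n i ≤ n j) :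
    ∀ x : CVert k n, ¬ Relation.TransGen (CArc k n) x x :=
  extremal_construction_acyclic_general k n
end

section
/- The geometry (G, I, O) with G = G(n₁,…,n_k), I = {v_{i,1} : 1 ≤ i ≤ k}, and O = {v_{i,nᵢ} : 1 ≤ i ≤ k} has a causal flow, with flow function f(v_{i,a}) = v_{i,a+1}. -/
/- Order the vertices by height along their paths, with all outputs `v_{i,nᵢ}` placed
above everything else, and break ties by the index of the path. Every neighbour `y ≠ x` of
`f(x) = v_{i,a+1}` is an output, lies strictly higher than `x`, or is `v_{j,a}` with `i < j`, so
`x` precedes it. This ranking is injective, hence induces the required partial order. -/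

namespace CVert

variable {k : ℕ} {n : Fin k → ℕ}

def height (x : CVert k n) : ℕ∞ :=
  if x.val.2 = n x.val.1 then ⊤ else x.val.2

def rank (x : CVert k n) : ℕ∞ ×ₗ Fin k :=
  toLex (x.height, x.val.1)

theorem height_of_lt {x : CVert k n} (hx : x.val.2 < n x.val.1) : x.height = x.val.2 :=
  if_neg hx.ne

theorem lt_height_of_lt {a : ℕ} {y : CVert k n} (h : a < y.val.2) : (a : ℕ∞) < y.height := by
  unfold height
  split_ifs
  · exact ENat.natCast_lt_top a
  · exact_mod_cast h

theorem rank_injective : Function.Injective (rank : CVert k n → ℕ∞ ×ₗ Fin k) := by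
  rintro ⟨⟨i, a⟩, ha⟩ ⟨⟨j, b⟩, hb⟩ h
  obtain ⟨hab, rfl⟩ := Prod.ext_iff.mp (toLex.injective h)
  simp only [height] at hab
  congr
  split_ifs at hab <;> simp_all

theorem rank_le_rank {x y : CVert k n} (hx : x.val.2 < n x.val.1)
    (h : y.val.2 = n y.val.1 ∨ x.val.2 < y.val.2 ∨ x.val.2 = y.val.2 ∧ x.val.1 ≤ y.val.1) :
    x.rank ≤ y.rank := by
  rw [rank, rank, Prod.Lex.toLex_le_toLex, height_of_lt hx]
  by_cases hy : y.val.2 = n y.val.1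
  · exact Or.inl (by simp [height, hy])
  rcases h with hy' | hlt | ⟨heq, hle⟩
  · exact absurd hy' hy
  · exact Or.inl (lt_height_of_lt hlt)
  · exact Or.inr ⟨by simp [height, hy, heq], hle⟩

theorem adj_CSucc (x : CVert k n) (h : x.val.2 < n x.val.1) :
    (CGraph k n).Adj x (CSucc k n x h) := by
  rw [CGraph, SimpleGraph.fromRel_adj]
  refine ⟨fun hx => ?_, Or.inl (Or.inl ⟨rfl, rfl⟩)⟩
  have := congrArg (fun z => z.val.2) hx
  simp [CSucc] at this

theorem rank_le_of_adj_CSucc {x y : CVert k n}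
    (h : x.val.2 < n x.val.1) (hy : (CGraph k n).Adj y (CSucc k n x h)) :
    x.rank ≤ y.rank := by
  refine rank_le_rank h ?_
  obtain ⟨⟨i, a⟩, ha⟩ := x
  obtain ⟨⟨j, b⟩, hb⟩ := y
  obtain ⟨-, hrel | hrel⟩ := (SimpleGraph.fromRel_adj _ _ _).mp hy <;>
    simp only [CRel, CSucc] at hrel h ⊢ <;> omega

end CVert

open CVert

theorem extremal_construction_has_flow_general (k : ℕ) (n : Fin k → ℕ) :
    ∃ le : CVert k n → CVert k n → Prop,
      (∀ x, le x x)
      ∧ (∀ x y z, le x y → le y z → le x z)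
      ∧ (∀ x y, le x y → le y x → x = y)
      ∧ ∀ (x : CVert k n) (h : x.val.2 < n x.val.1),
          (CSucc k n x h).val.2 ≠ 1
          ∧ (CGraph k n).Adj x (CSucc k n x h)
          ∧ le x (CSucc k n x h)
          ∧ ∀ y, (CGraph k n).Adj y (CSucc k n x h) → le x y := by
  refine ⟨fun x y => x.rank ≤ y.rank, fun x => le_rfl, fun x y z => le_trans,
    fun x y hxy hyx => rank_injective (le_antisymm hxy hyx), fun x h => ?_⟩
  refine ⟨?_, adj_CSucc x h, rank_le_rank h (Or.inr (Or.inl (Nat.lt_succ_self _))),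
    fun y => rank_le_of_adj_CSucc h⟩
  simpa [CSucc] using Nat.one_le_iff_ne_zero.mp x.prop.1

/-- The geometry `(G(n₁,…,n_k), I, O)` with `I = {v_{i,1}}` and
`O = {v_{i,nᵢ}}` has a causal flow, with flow function
`f(v_{i,a}) = v_{i,a+1}`. -/
theorem extremal_construction_has_flow (k : ℕ) (n : Fin k → ℕ)
    (hpos : ∀ i, 1 ≤ n i) (hmono : ∀ i j : Fin k, i ≤ j → n i ≤ n j) :
    ∃ le : CVert k n → CVert k n → Prop,
      (∀ x, le x x)
      ∧ (∀ x y z, le x y → le y z → le x z)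
      ∧ (∀ x y, le x y → le y x → x = y)
      ∧ ∀ (x : CVert k n) (h : x.val.2 < n x.val.1),
          (CSucc k n x h).val.2 ≠ 1
          ∧ (CGraph k n).Adj x (CSucc k n x h)
          ∧ le x (CSucc k n x h)
          ∧ ∀ y, (CGraph k n).Adj y (CSucc k n x h) → le x y :=
  extremal_construction_has_flow_general k n
end

section
/- For every n ≥ k ≥ 1, there exists a geometry (G, I, O) with |V(G)| = n, |I| = |O| = k, having a causal flow, and with |E(G)| = kn − k(k+1)/2. Hence the extremal bound kn − (k+1 choose 2) is tight. -/
/-!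
The witness is the `k`-th power of the path on `0, …, n - 1`: `i ~ j` iff `0 < |i - j| ≤ k`,
with inputs `0, …, k - 1`, outputs `n - k, …, n - 1`, flow `i ↦ i + k` and the order of `ℕ`.
Every neighbour of `i + k` is at least `i`, which is the causal flow condition. Counting each
edge at its larger endpoint, vertex `b` has `min b k` smaller neighbours, and
`∑ b < n, min b k = k n - k (k + 1) / 2` once `k ≤ n`.
-/

open Finset

namespace SimpleGraph

theorem card_edgeFinset_eq_sum_card_lt_adj {V : Type*} [LinearOrder V] [Fintype V]
    (G : SimpleGraph V) [DecidableRel G.Adj] :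
    #G.edgeFinset = ∑ b, #{a | a < b ∧ G.Adj a b} := by
  rw [← card_sigma]
  symm
  refine card_nbij' (fun p => s(p.2, p.1)) (fun e => ⟨e.sup, e.inf⟩) ?_ ?_ ?_ ?_
  · rintro ⟨b, a⟩ h
    simp only [mem_coe, mem_sigma, mem_univ, mem_filter, true_and] at h
    simpa using h.2
  · intro e he
    induction e with | _ a b =>
    have hab : G.Adj a b := by simpa using he
    rcases lt_or_gt_of_ne hab.ne with h | h
    · simp [h, h.le, hab]
    · simp [h, h.le, hab.symm]
  · rintro ⟨b, a⟩ h
    simp only [mem_coe, mem_sigma, mem_univ, mem_filter, true_and] at h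
    simp [h.1.le]
  · intro e _
    induction e with | _ a b =>
    rcases le_total a b with h | h <;> simp [h, Sym2.eq_swap]

end SimpleGraph

theorem Finset.sum_range_min_of_le {k n : ℕ} (hkn : k ≤ n) :
    ∑ b ∈ range n, min b k = k * n - k * (k + 1) / 2 := by
  induction n, hkn using Nat.le_induction with
  | base =>
    have hsum : ∑ b ∈ range k, min b k = ∑ b ∈ range k, b :=
      sum_congr rfl fun b hb => min_eq_left (mem_range.1 hb).le
    have := sum_range_id_mul_two (k + 1)
    rw [sum_range_succ, Nat.add_sub_cancel] at this
    rw [hsum, show k * (k + 1) = k * k + k by ring]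
    rw [show (k + 1) * k = k * k + k by ring] at this
    omega
  | succ m hkm ih =>
    rw [sum_range_succ, ih, min_eq_right hkm]
    have hkk : k * k ≤ k * m := Nat.mul_le_mul_left k hkm
    have hle : k ≤ k * k := Nat.le_mul_self k
    rw [show k * (k + 1) = k * k + k by ring, Nat.mul_succ]
    omega

def bandGraph (n k : ℕ) : SimpleGraph (Fin n) where
  Adj a b := a ≠ b ∧ (b : ℕ) ≤ a + k ∧ (a : ℕ) ≤ b + k
  symm := ⟨fun _ _ h => ⟨h.1.symm, h.2.2, h.2.1⟩⟩
  loopless := ⟨fun _ h => h.1 rfl⟩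

namespace bandGraph

variable {n k : ℕ}

instance : DecidableRel (bandGraph n k).Adj := fun _ _ => inferInstanceAs (Decidable (_ ∧ _ ∧ _))

theorem adj_iff {a b : Fin n} :
    (bandGraph n k).Adj a b ↔ a ≠ b ∧ (b : ℕ) ≤ a + k ∧ (a : ℕ) ≤ b + k :=
  Iff.rfl

theorem card_lt_adj (b : Fin n) : #{a | a < b ∧ (bandGraph n k).Adj a b} = min (b : ℕ) k := by
  have hIco : ({a | a < b ∧ (bandGraph n k).Adj a b} : Finset (Fin n)) =
      Ico ⟨b - k, by omega⟩ b := by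
    ext a
    simp only [mem_filter, mem_univ, true_and, mem_Ico, adj_iff, Fin.lt_def, Fin.le_def, ne_eq,
      Fin.ext_iff]
    omega
  rw [hIco, Fin.card_Ico]
  dsimp only
  omega

theorem card_edgeFinset (hkn : k ≤ n) :
    #(bandGraph n k).edgeFinset = k * n - k * (k + 1) / 2 := by
  rw [SimpleGraph.card_edgeFinset_eq_sum_card_lt_adj]
  simp only [card_lt_adj]
  rw [Fin.sum_univ_eq_sum_range (fun b => min b k), sum_range_min_of_le hkn]

theorem adj_add (hk : 1 ≤ k) {x : Fin n} (hx : (x : ℕ) + k < n) :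
    (bandGraph n k).Adj x ⟨x + k, hx⟩ := by
  simp only [adj_iff, ne_eq, Fin.ext_iff]
  omega

theorem le_of_adj_add {x y : Fin n} (hx : (x : ℕ) + k < n)
    (hy : (bandGraph n k).Adj y ⟨x + k, hx⟩) : x ≤ y := by
  simp only [adj_iff] at hy
  rw [Fin.le_def]
  omega

end bandGraph

def bandFlow (n k : ℕ) (v : Fin n) : Fin n :=
  if h : (v : ℕ) + k < n then ⟨v + k, h⟩ else v

/-- For every `n ≥ k ≥ 1` there is a geometry `(G, I, O)` on `n` vertices with
`|I| = |O| = k` having a causal flow and `|E(G)| = kn − k(k+1)/2`: the extremal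
bound `kn − (k+1 choose 2)` is tight. -/
theorem extremal_bound_tight (n k : ℕ) (hk : 1 ≤ k) (hkn : k ≤ n) :
    ∃ (V : Type) (_ : Fintype V) (G : SimpleGraph V) (I O : Set V)
      (f : V → V) (le : V → V → Prop),
      Fintype.card V = n ∧ I.ncard = k ∧ O.ncard = k
      ∧ (∀ x, le x x)
      ∧ (∀ x y z, le x y → le y z → le x z)
      ∧ (∀ x y, le x y → le y x → x = y)
      ∧ (∀ x ∉ O, f x ∉ I ∧ G.Adj x (f x) ∧ le x (f x)
          ∧ ∀ y, G.Adj y (f x) → le x y)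
      ∧ G.edgeSet.ncard = k * n - k * (k + 1) / 2 := by
  refine ⟨Fin n, inferInstance, bandGraph n k, ↑(Iic (⟨k - 1, by omega⟩ : Fin n)),
    ↑(Ici (⟨n - k, by omega⟩ : Fin n)), bandFlow n k, (· ≤ ·), Fintype.card_fin n, ?_, ?_,
    fun _ => le_rfl, fun _ _ _ => le_trans, fun _ _ => le_antisymm, ?_, ?_⟩
  · rw [Set.ncard_coe_finset, Fin.card_Iic]
    dsimp only
    omega
  · rw [Set.ncard_coe_finset, Fin.card_Ici]
    dsimp only
    omega
  · intro x hx
    have hxk : (x : ℕ) + k < n := by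
      simp only [coe_Ici, Set.mem_Ici, Fin.le_def] at hx
      omega
    rw [bandFlow, dif_pos hxk]
    refine ⟨?_, bandGraph.adj_add hk hxk, ?_, fun y => bandGraph.le_of_adj_add hxk⟩
    · simp only [coe_Iic, Set.mem_Iic, Fin.le_def]
      omega
    · exact Fin.le_def.2 (Nat.le_add_right _ _)
  · rw [← SimpleGraph.coe_edgeFinset, Set.ncard_coe_finset, bandGraph.card_edgeFinset hkn]
end

section
/- Let (f, ≼) be a causal flow on a geometry (G, I, O) and let ≼_f denote the natural pre-order for f (the reflexive-transitive closure of the relations x ≼_f f(x) and x ≼_f y whenever y ~ f(x), for x ∈ V(G)\O). Then ≼_f is contained in ≼ (i.e., x ≼_f y implies x ≼ y), and consequently ≼_f is antisymmetric, so (f, ≼_f) is itself a causal flow. -/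
/-! Every generating step `a → f a` or `a → b` with `b ~ f a` (for `a ∉ O`) is an instance of
`≼` by the flow axioms, so the closure `≼_f` lies inside the reflexive, transitive `≼`, and
inherits its antisymmetry. That `(f, ≼_f)` satisfies the flow conditions is immediate, since
they are exactly the generating steps. -/

namespace Relation

variable {α : Type*} {r p : α → α → Prop}

theorem ReflTransGen.of_le_of_refl_of_trans (hrefl : ∀ x, p x x)
    (htrans : ∀ x y z, p x y → p y z → p x z) (hle : ∀ a b, r a b → p a b) {a b : α}
    (hab : ReflTransGen r a b) : p a b :=
  hab.trans_induction_on hrefl (hle _ _) fun _ _ => htrans _ _ _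

theorem ReflTransGen.antisymm_of_le (hrefl : ∀ x, p x x)
    (htrans : ∀ x y z, p x y → p y z → p x z) (hantisymm : ∀ x y, p x y → p y x → x = y)
    (hle : ∀ a b, r a b → p a b) {a b : α}
    (hab : ReflTransGen r a b) (hba : ReflTransGen r b a) : a = b :=
  hantisymm a b (hab.of_le_of_refl_of_trans hrefl htrans hle)
    (hba.of_le_of_refl_of_trans hrefl htrans hle)

end Relation

theorem natural_preorder_of_causal_flow_general {V : Type*}
    (G : SimpleGraph V) (O : Set V) (f : V → V) (le : V → V → Prop)
    (hrefl : ∀ x, le x x)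
    (htrans : ∀ x y z, le x y → le y z → le x z)
    (hantisymm : ∀ x y, le x y → le y x → x = y)
    (hle : ∀ x ∉ O, le x (f x))
    (hinf : ∀ x ∉ O, ∀ y, G.Adj y (f x) → le x y) :
    (∀ x y, Relation.ReflTransGen
        (fun a b => a ∉ O ∧ (b = f a ∨ G.Adj b (f a))) x y → le x y)
    ∧ (∀ x y, Relation.ReflTransGen
          (fun a b => a ∉ O ∧ (b = f a ∨ G.Adj b (f a))) x y →
        Relation.ReflTransGen
          (fun a b => a ∉ O ∧ (b = f a ∨ G.Adj b (f a))) y x → x = y)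
    ∧ (∀ x ∉ O,
        Relation.ReflTransGen
          (fun a b => a ∉ O ∧ (b = f a ∨ G.Adj b (f a))) x (f x)
        ∧ ∀ y, G.Adj y (f x) →
            Relation.ReflTransGen
              (fun a b => a ∉ O ∧ (b = f a ∨ G.Adj b (f a))) x y) := by
  have step_le : ∀ a b, (a ∉ O ∧ (b = f a ∨ G.Adj b (f a))) → le a b := by
    rintro a b ⟨ha, rfl | hadj⟩
    exacts [hle a ha, hinf a ha b hadj]
  exact ⟨fun _ _ h => h.of_le_of_refl_of_trans hrefl htrans step_le,
    fun _ _ => Relation.ReflTransGen.antisymm_of_le hrefl htrans hantisymm step_le,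
    fun x hx => ⟨.single ⟨hx, .inl rfl⟩, fun _ hy => .single ⟨hx, .inr hy⟩⟩⟩

/-- Let `(f, ≼)` be a causal flow on a geometry `(G, I, O)` and let `≼_f` be
the natural pre-order for `f` (the reflexive-transitive closure of the
relations `x ≼_f f x` and `x ≼_f y` whenever `y ~ f x`, for `x ∈ V(G)\O`).
Then `≼_f` is contained in `≼`; consequently `≼_f` is antisymmetric, and
`(f, ≼_f)` is itself a causal flow. -/
theorem natural_preorder_of_causal_flow {V : Type*} [Fintype V]
    (G : SimpleGraph V) (I O : Set V) (f : V → V) (le : V → V → Prop)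
    (hrefl : ∀ x, le x x)
    (htrans : ∀ x y z, le x y → le y z → le x z)
    (hantisymm : ∀ x y, le x y → le y x → x = y)
    (hcod : ∀ x ∉ O, f x ∉ I)
    (hadj : ∀ x ∉ O, G.Adj x (f x))
    (hle : ∀ x ∉ O, le x (f x))
    (hinf : ∀ x ∉ O, ∀ y, G.Adj y (f x) → le x y) :
    (∀ x y, Relation.ReflTransGen
        (fun a b => a ∉ O ∧ (b = f a ∨ G.Adj b (f a))) x y → le x y)
    ∧ (∀ x y, Relation.ReflTransGen
          (fun a b => a ∉ O ∧ (b = f a ∨ G.Adj b (f a))) x y →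
        Relation.ReflTransGen
          (fun a b => a ∉ O ∧ (b = f a ∨ G.Adj b (f a))) y x → x = y)
    ∧ (∀ x ∉ O,
        Relation.ReflTransGen
          (fun a b => a ∉ O ∧ (b = f a ∨ G.Adj b (f a))) x (f x)
        ∧ ∀ y, G.Adj y (f x) →
            Relation.ReflTransGen
              (fun a b => a ∉ O ∧ (b = f a ∨ G.Adj b (f a))) x y) :=
  natural_preorder_of_causal_flow_general G O f le hrefl htrans hantisymm hle hinf
end
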